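/- Let E, F, G be finite-dimensional real inner product spaces, let C : E →ₗ[ℝ] F and A : E →ₗ[ℝ] G be linear maps with ker A ∩ ker C = {0}, let f ∈ G, and let g ∈ F lie in the range of C. Let β* be the (unique, under these hypotheses) minimizer of ‖Aβ − f‖ over {β ∈ E : Cβ = g}. Suppose β : ℝ → E is a function such that for every λ > 0, β(λ) is a global minimizer over E of the penalized functional β ↦ ‖Aβ − f‖² + λ‖Cβ − g‖². Then β(λ) converges to β* as λ → ∞. -/

import Mathlib

open scoped RealInnerProductSpace

/-- An injective linear map from a finite-dimensional normed space is bounded below. -/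
lemma exists_norm_le_of_injective' {E F : Type*}
    [NormedAddCommGroup E] [NormedSpace ℝ E] [FiniteDimensional ℝ E]
    [NormedAddCommGroup F] [NormedSpace ℝ F]
    (T : E →ₗ[ℝ] F) (hT : Function.Injective T) :
    ∃ c : ℝ, 0 < c ∧ ∀ x, ‖x‖ ≤ c * ‖T x‖ := by
  let e := LinearEquiv.ofInjective T hT
  let S : LinearMap.range T →L[ℝ] E :=
    LinearMap.toContinuousLinearMap (e.symm : LinearMap.range T →ₗ[ℝ] E)
  refine ⟨‖S‖ + 1, by positivity, fun x => ?_⟩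
  have hx : S ⟨T x, LinearMap.mem_range_self T x⟩ = x := by
    have : S ⟨T x, LinearMap.mem_range_self T x⟩ = e.symm (e x) := rfl
    rw [this, LinearEquiv.symm_apply_apply]
  calc ‖x‖ = ‖S ⟨T x, LinearMap.mem_range_self T x⟩‖ := by rw [hx]
    _ ≤ ‖S‖ * ‖(⟨T x, LinearMap.mem_range_self T x⟩ : LinearMap.range T)‖ := S.le_opNorm _
    _ = ‖S‖ * ‖T x‖ := rfl
    _ ≤ (‖S‖ + 1) * ‖T x‖ := by
        have := norm_nonneg (T x); have := norm_nonneg S; nlinarith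

/-- Weighting-method interpretation of LSE-ELM: if `ker A ∩ ker C = {0}`, `g` lies in the
range of `C`, `βstar` is the minimizer of `‖Aβ - f‖` subject to `Cβ = g`, and for every
`λ > 0` the vector `β λ` is a global minimizer of the penalized functional
`b ↦ ‖A b - f‖² + λ ‖C b - g‖²`, then `β λ → βstar` as `λ → ∞`. -/
theorem penalized_minimizers_tendsto_constrained_minimizer
    {E F G : Type*}
    [NormedAddCommGroup E] [InnerProductSpace ℝ E] [FiniteDimensional ℝ E]
    [NormedAddCommGroup F] [InnerProductSpace ℝ F] [FiniteDimensional ℝ F]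
    [NormedAddCommGroup G] [InnerProductSpace ℝ G] [FiniteDimensional ℝ G]
    (C : E →ₗ[ℝ] F) (A : E →ₗ[ℝ] G)
    (hker : LinearMap.ker A ⊓ LinearMap.ker C = ⊥)
    (f : G) (g : F) (hg : g ∈ LinearMap.range C)
    (βstar : E) (hβstarC : C βstar = g)
    (hβstarmin : ∀ β : E, C β = g → ‖A βstar - f‖ ≤ ‖A β - f‖)
    (β : ℝ → E)
    (hβ : ∀ l : ℝ, 0 < l → ∀ b : E,
      ‖A (β l) - f‖ ^ 2 + l * ‖C (β l) - g‖ ^ 2 ≤ ‖A b - f‖ ^ 2 + l * ‖C b - g‖ ^ 2) :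
    Filter.Tendsto β Filter.atTop (nhds βstar) := by
  set r : G := A βstar - f with hr
  -- Step A: r ⟂ A (ker C)
  have hr_orth : ∀ w ∈ LinearMap.ker C, ⟪r, A w⟫ = 0 := by
    intro w hw
    set a := ⟪r, A w⟫ with ha
    set cc := ‖A w‖ ^ 2 with hcc
    have hccn : (0:ℝ) ≤ cc := sq_nonneg _
    have key : ∀ t : ℝ, 0 ≤ 2 * t * a + t ^ 2 * cc := by
      intro t
      have hfeas : C (βstar + t • w) = g := by
        simp [map_add, map_smul, hβstarC, LinearMap.mem_ker.mp hw]
      have h1 := hβstarmin _ hfeas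
      have h2 : A (βstar + t • w) - f = r + t • A w := by
        simp [map_add, map_smul, hr]; abel
      rw [h2] at h1
      have h3 : ‖r + t • A w‖ ^ 2 = ‖r‖ ^ 2 + 2 * t * a + t ^ 2 * cc := by
        rw [norm_add_sq_real, real_inner_smul_right, norm_smul]
        simp only [ha, hcc, Real.norm_eq_abs, mul_pow, sq_abs]
        ring
      nlinarith [norm_nonneg r, norm_nonneg (r + t • A w)]
    have h := key (-a / (cc + 1))
    have h1 : (0:ℝ) < cc + 1 := by linarith
    have heq : 2 * (-a / (cc + 1)) * a + (-a / (cc + 1)) ^ 2 * cc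
        = -(a ^ 2 * (cc + 2)) / ((cc + 1) ^ 2) := by
      field_simp; ring
    rw [heq, neg_div] at h
    have h2 : a ^ 2 * (cc + 2) ≤ 0 := by
      by_contra hpos
      push_neg at hpos
      have := div_pos hpos (by positivity : (0:ℝ) < (cc + 1) ^ 2)
      linarith
    have h3 : a ^ 2 = 0 := le_antisymm (by nlinarith) (sq_nonneg a)
    exact pow_eq_zero_iff two_ne_zero |>.mp h3
  -- constants
  set K : Submodule ℝ E := LinearMap.ker C with hK
  -- c₁ : C bounded below on Kᗮ
  have hCinj : Function.Injective (C.domRestrict Kᗮ) := by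
    rw [← LinearMap.ker_eq_bot]
    rw [Submodule.eq_bot_iff]
    rintro ⟨x, hx⟩ hx0
    have hxK : x ∈ K := by
      simpa [hK, LinearMap.mem_ker] using hx0
    have : x = 0 := by
      have := (Submodule.orthogonal_disjoint K).le_bot ⟨hxK, hx⟩
      simpa using this
    simp [this]
  obtain ⟨c₁, hc₁pos, hc₁⟩ := exists_norm_le_of_injective' (C.domRestrict Kᗮ) hCinj
  -- c₂ : (A, C) bounded below on E
  have hTinj : Function.Injective (A.prod C) := by
    rw [← LinearMap.ker_eq_bot, LinearMap.ker_prod, hker]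
  obtain ⟨c₂, hc₂pos, hc₂⟩ := exists_norm_le_of_injective' (A.prod C) hTinj
  set Acl := LinearMap.toContinuousLinearMap A with hAcl
  set K₁ : ℝ := 2 * ‖r‖ * ‖Acl‖ * c₁ with hK₁
  have hK₁n : 0 ≤ K₁ := by positivity
  -- x l := ‖r‖² / l → 0
  have hx0 : Filter.Tendsto (fun l : ℝ => ‖r‖ ^ 2 / l) Filter.atTop (nhds 0) :=
    Filter.Tendsto.div_atTop tendsto_const_nhds Filter.tendsto_id
  have hb0 : Filter.Tendsto
      (fun l : ℝ => c₂ * (Real.sqrt (K₁ * Real.sqrt (‖r‖ ^ 2 / l)) + Real.sqrt (‖r‖ ^ 2 / l)))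
      Filter.atTop (nhds 0) := by
    have hcont : Continuous fun y : ℝ => c₂ * (Real.sqrt (K₁ * Real.sqrt y) + Real.sqrt y) :=
      continuous_const.mul (((Real.continuous_sqrt.comp
        (continuous_const.mul Real.continuous_sqrt)).add Real.continuous_sqrt))
    have h00 : c₂ * (Real.sqrt (K₁ * Real.sqrt 0) + Real.sqrt 0) = 0 := by simp
    exact (hcont.tendsto' 0 0 h00).comp hx0
  rw [tendsto_iff_norm_sub_tendsto_zero]
  refine squeeze_zero' (Filter.Eventually.of_forall fun l => norm_nonneg _) ?_ hb0
  filter_upwards [Filter.eventually_gt_atTop (0:ℝ)] with l hl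
  -- pointwise bound
  set d : E := β l - βstar with hd
  have hCd_eq : C d = C (β l) - g := by simp [hd, map_sub, hβstarC]
  have hpen := hβ l hl βstar
  rw [hβstarC, sub_self] at hpen
  simp only [norm_zero] at hpen
  have hpen' : ‖A (β l) - f‖ ^ 2 + l * ‖C (β l) - g‖ ^ 2 ≤ ‖r‖ ^ 2 := by
    simpa [hr] using hpen
  have hsq : (0:ℝ) ≤ ‖A (β l) - f‖ ^ 2 := sq_nonneg _
  have hCd2 : ‖C d‖ ^ 2 ≤ ‖r‖ ^ 2 / l := by
    rw [hCd_eq, le_div_iff₀ hl]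
    nlinarith
  have hCd : ‖C d‖ ≤ Real.sqrt (‖r‖ ^ 2 / l) :=
    (Real.le_sqrt (norm_nonneg _) (by positivity)).mpr hCd2
  -- decomposition
  set w : E := (K.orthogonalProjectionOnto d : E) with hw
  set u : E := d - w with hu
  have hu_mem : u ∈ Kᗮ := K.sub_starProjection_mem_orthogonal d
  have hw_mem : w ∈ K := (K.orthogonalProjectionOnto d).2
  have hCu : C u = C d := by
    have : C w = 0 := LinearMap.mem_ker.mp hw_mem
    simp [hu, map_sub, this]
  have hu_norm : ‖u‖ ≤ c₁ * ‖C d‖ := by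
    have := hc₁ ⟨u, hu_mem⟩
    simpa [LinearMap.domRestrict_apply, hCu] using this
  -- key inequality
  have hA_ineq : ‖A (β l) - f‖ ^ 2 ≤ ‖r‖ ^ 2 := by
    have := mul_nonneg hl.le (sq_nonneg ‖C (β l) - g‖)
    linarith
  have hArd : A (β l) - f = r + A d := by simp only [hd, map_sub, hr]; abel
  rw [hArd, norm_add_sq_real] at hA_ineq
  have hsplit : ⟪r, A d⟫ = ⟪r, A u⟫ := by
    have hdu : d = u + w := by simp [hu]
    rw [hdu, map_add, inner_add_right, hr_orth w hw_mem, add_zero]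
  have hAu_norm : ‖A u‖ ≤ ‖Acl‖ * ‖u‖ := by
    have := Acl.le_opNorm u
    simpa [hAcl] using this
  have hinner : |⟪r, A u⟫| ≤ ‖r‖ * ‖A u‖ := abs_real_inner_le_norm r (A u)
  have hAd2 : ‖A d‖ ^ 2 ≤ K₁ * ‖C d‖ := by
    have h1 : ‖A d‖ ^ 2 ≤ -2 * ⟪r, A u⟫ := by
      rw [hsplit] at hA_ineq; linarith
    have h2 : -⟪r, A u⟫ ≤ ‖r‖ * ‖A u‖ := by
      have := abs_le.mp hinner; linarith [this.1]
    have h3 : ‖r‖ * ‖A u‖ ≤ ‖r‖ * (‖Acl‖ * (c₁ * ‖C d‖)) := by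
      have hAcln : (0:ℝ) ≤ ‖Acl‖ := norm_nonneg _
      have : ‖A u‖ ≤ ‖Acl‖ * (c₁ * ‖C d‖) := by
        calc ‖A u‖ ≤ ‖Acl‖ * ‖u‖ := hAu_norm
          _ ≤ ‖Acl‖ * (c₁ * ‖C d‖) := by
              exact mul_le_mul_of_nonneg_left hu_norm hAcln
      exact mul_le_mul_of_nonneg_left this (norm_nonneg r)
    calc ‖A d‖ ^ 2 ≤ -2 * ⟪r, A u⟫ := h1
      _ ≤ 2 * (‖r‖ * ‖A u‖) := by linarith
      _ ≤ 2 * (‖r‖ * (‖Acl‖ * (c₁ * ‖C d‖))) := by linarith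
      _ = K₁ * ‖C d‖ := by rw [hK₁]; ring
  have hAd : ‖A d‖ ≤ Real.sqrt (K₁ * Real.sqrt (‖r‖ ^ 2 / l)) := by
    refine (Real.le_sqrt (norm_nonneg _) ?_).mpr ?_
    · positivity
    · calc ‖A d‖ ^ 2 ≤ K₁ * ‖C d‖ := hAd2
        _ ≤ K₁ * Real.sqrt (‖r‖ ^ 2 / l) := mul_le_mul_of_nonneg_left hCd hK₁n
  -- conclude
  have hTd : ‖d‖ ≤ c₂ * (‖A d‖ + ‖C d‖) := by
    have h := hc₂ d
    have hnorm : ‖(A.prod C) d‖ = max ‖A d‖ ‖C d‖ := by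
      simp [LinearMap.prod_apply, Prod.norm_def]
    rw [hnorm] at h
    have : max ‖A d‖ ‖C d‖ ≤ ‖A d‖ + ‖C d‖ :=
      max_le (by linarith [norm_nonneg (C d)]) (by linarith [norm_nonneg (A d)])
    calc ‖d‖ ≤ c₂ * max ‖A d‖ ‖C d‖ := h
      _ ≤ c₂ * (‖A d‖ + ‖C d‖) := mul_le_mul_of_nonneg_left this (le_of_lt hc₂pos)
  calc ‖β l - βstar‖ = ‖d‖ := by rw [hd]
    _ ≤ c₂ * (‖A d‖ + ‖C d‖) := hTd
    _ ≤ c₂ * (Real.sqrt (K₁ * Real.sqrt (‖r‖ ^ 2 / l)) + Real.sqrt (‖r‖ ^ 2 / l)) := by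
        exact mul_le_mul_of_nonneg_left (add_le_add hAd hCd) (le_of_lt hc₂pos)
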